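/- arXiv:2408.04466 — 2 statements merged into one kernel-verified Lean document; each statement's English description precedes it below -/
import Mathlib

section
/- For a ray from a point p not on a smooth closed plane curve γ, if the ray meets γ only in transversal intersections, then the winding number of γ around p equals the sum over intersection points of the signs of the crossings (sign of the determinant of the ray direction and the curve tangent, suitably oriented). -/
/-!
Normalise the lift to `g = (θ - arg v) / 2π`. Then `g t` is an integer exactly when `γ t` lies on
the ray, and `g (t + 1) = g t + N` where `2πN = θ 1 - θ 0`. On a period `[a, a + 1]` whose endpoints
miss the ray, `⌊g⌋` is constant between crossings, and at a crossing `s` it jumps by the sign of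
`g' s = Im (γ' s / (γ s - p)) / 2π`, which is the sign of `det (v, γ' s)`. Summing the jumps gives
`⌊g (a + 1)⌋ - ⌊g a⌋ = N`.
-/

open Set Filter Topology Complex

section FloorCounting

variable {g g' : ℝ → ℝ} {a b s d : ℝ}

theorem floor_eq_floor_of_forall_ne_intCast (hab : a ≤ b) (hg : ContinuousOn g (Icc a b))
    (h : ∀ x ∈ Icc a b, ∀ n : ℤ, g x ≠ n) : ⌊g b⌋ = ⌊g a⌋ := by
  have hivt := intermediate_value_uIcc (uIcc_of_le hab ▸ hg)
  by_contra hne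
  have hn : ∃ n : ℤ, (n : ℝ) ∈ uIcc (g a) (g b) := by
    rcases lt_or_gt_of_ne hne with hlt | hlt
    · exact ⟨⌊g a⌋, mem_uIcc.2 <| .inr ⟨(Int.floor_lt.1 hlt).le, Int.floor_le _⟩⟩
    · exact ⟨⌊g b⌋, mem_uIcc.2 <| .inl ⟨(Int.floor_lt.1 hlt).le, Int.floor_le _⟩⟩
  obtain ⟨n, hn⟩ := hn
  obtain ⟨x, hx, hgx⟩ := hivt hn
  exact h x (uIcc_of_le hab ▸ hx) n hgx

theorem HasDerivAt.eventually_nhdsGT_lt (hd : HasDerivAt g d s) (hpos : 0 < d) :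
    ∀ᶠ t in 𝓝[>] s, g s < g t := by
  filter_upwards [(hasDerivAt_iff_tendsto_slope_left_right.1 hd).2.eventually (lt_mem_nhds hpos),
    self_mem_nhdsWithin] with t hslope (hst : s < t)
  rw [slope_def_field] at hslope
  exact sub_pos.1 <| (div_pos_iff_of_pos_right (sub_pos.2 hst)).1 hslope

theorem HasDerivAt.eventually_nhdsLT_lt (hd : HasDerivAt g d s) (hpos : 0 < d) :
    ∀ᶠ t in 𝓝[<] s, g t < g s := by
  filter_upwards [(hasDerivAt_iff_tendsto_slope_left_right.1 hd).1.eventually (lt_mem_nhds hpos),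
    self_mem_nhdsWithin] with t hslope (hts : t < s)
  rw [slope_def_field, div_pos_iff] at hslope
  rcases hslope with ⟨-, h⟩ | ⟨h, -⟩ <;> linarith

theorem floor_sub_floor_eventually_eq_sign (hd : HasDerivAt g d s) (hd0 : d ≠ 0) {n : ℤ}
    (hn : g s = n) : ∀ᶠ u in 𝓝[<] s, ∀ᶠ t in 𝓝[>] s, (⌊g t⌋ : ℝ) - ⌊g u⌋ = Real.sign d := by
  have hnear : ∀ᶠ t in 𝓝 s, g t ∈ Ioo ((n : ℝ) - 1) (n + 1) :=
    hd.continuousAt.eventually_mem (hn ▸ Ioo_mem_nhds (by linarith) (by linarith))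
  have floor_eq {x : ℝ} {m : ℤ} (h₁ : (m : ℝ) ≤ x) (h₂ : x < m + 1) : (⌊x⌋ : ℝ) = m := by
    exact_mod_cast Int.floor_eq_iff.2 ⟨h₁, h₂⟩
  rcases hd0.lt_or_gt with hneg | hpos
  · have hneg' : 0 < -d := neg_pos.2 hneg
    filter_upwards [hd.neg.eventually_nhdsLT_lt hneg', nhdsWithin_le_nhds hnear] with u hu hu'
    filter_upwards [hd.neg.eventually_nhdsGT_lt hneg', nhdsWithin_le_nhds hnear] with t ht ht'
    simp only [Pi.neg_apply, neg_lt_neg_iff, hn] at hu ht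
    rw [floor_eq (m := n - 1) (by push_cast; linarith [ht'.1]) (by push_cast; linarith),
      floor_eq hu.le hu'.2, Real.sign_of_neg hneg]
    push_cast
    ring
  · filter_upwards [hd.eventually_nhdsLT_lt hpos, nhdsWithin_le_nhds hnear] with u hu hu'
    filter_upwards [hd.eventually_nhdsGT_lt hpos, nhdsWithin_le_nhds hnear] with t ht ht'
    rw [hn] at hu ht
    rw [floor_eq ht.le ht'.2, floor_eq (m := n - 1) (by push_cast; linarith [hu'.1])
      (by push_cast; linarith), Real.sign_of_pos hpos]
    push_cast
    ring

theorem floor_sub_floor_eq_sum_sign {S : Finset ℝ} (hab : a ≤ b) (hg : ContinuousOn g (Icc a b))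
    (hS : ↑S ⊆ Ioo a b) (hint : ∀ x ∈ Icc a b, (∃ n : ℤ, g x = n) ↔ x ∈ S)
    (hd : ∀ s ∈ S, HasDerivAt g (g' s) s) (hd0 : ∀ s ∈ S, g' s ≠ 0) :
    (⌊g b⌋ : ℝ) - ⌊g a⌋ = ∑ s ∈ S, Real.sign (g' s) := by
  induction S using Finset.induction_on_max generalizing b with
  | empty =>
    rw [floor_eq_floor_of_forall_ne_intCast hab hg fun x hx n hn => by
      simpa using (hint x hx).1 ⟨n, hn⟩]
    simp
  | insert s S hlt ih =>
    have hsS : s ∉ S := fun h => lt_irrefl s (hlt s h)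
    obtain ⟨has, hsb⟩ := hS (Finset.mem_insert_self s S)
    obtain ⟨n, hn⟩ := (hint s ⟨has.le, hsb.le⟩).2 (Finset.mem_insert_self s S)
    have hjump := floor_sub_floor_eventually_eq_sign (hd s (Finset.mem_insert_self s S))
      (hd0 s (Finset.mem_insert_self s S)) hn
    have hu : ∀ᶠ u in 𝓝[<] s, u ∈ Ioo a s ∧ ∀ x ∈ S, x < u :=
      (Filter.eventually_mem_set.2 (Ioo_mem_nhdsLT has)).and <|
        (Finset.eventually_all S).2 fun x hx => nhdsWithin_le_nhds (eventually_gt_nhds (hlt x hx))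
    obtain ⟨u, hjump_u, ⟨hau, hus⟩, hSu⟩ := (hjump.and hu).exists
    obtain ⟨t, hjump_ut, hst, htb⟩ :=
      (hjump_u.and (Filter.eventually_mem_set.2 (Ioo_mem_nhdsGT hsb))).exists
    have hleft : (⌊g u⌋ : ℝ) - ⌊g a⌋ = ∑ x ∈ S, Real.sign (g' x) := by
      refine ih hau.le (hg.mono (Icc_subset_Icc_right (by linarith)))
        (fun x hx => ⟨(hS (Finset.mem_insert_of_mem hx)).1, hSu x hx⟩) (fun x hx => ?_)
        (fun x hx => hd x (Finset.mem_insert_of_mem hx))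
        (fun x hx => hd0 x (Finset.mem_insert_of_mem hx))
      rw [hint x ⟨hx.1, by linarith [hx.2]⟩, Finset.mem_insert,
        or_iff_right (by linarith [hx.2] : x ≠ s)]
    have hright : ⌊g b⌋ = ⌊g t⌋ := by
      refine floor_eq_floor_of_forall_ne_intCast htb.le (hg.mono (Icc_subset_Icc_left
        (by linarith))) fun x hx m hm => ?_
      rcases Finset.mem_insert.1 ((hint x ⟨by linarith [hx.1], hx.2⟩).1 ⟨m, hm⟩) with rfl | hxS
      · linarith [hx.1]
      · linarith [hx.1, hlt x hxS]
    rw [Finset.sum_insert hsS, ← hleft, hright, ← hjump_ut]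
    ring

theorem floor_add_one_sub_floor_eq_sum_sign {T : Finset ℝ} (hg : Continuous g)
    (hg' : Function.Periodic g' 1) (hT : ↑T ⊆ Ico (0 : ℝ) 1)
    (hint : ∀ x, (∃ n : ℤ, g x = n) ↔ Int.fract x ∈ T)
    (hd : ∀ x, Int.fract x ∈ T → HasDerivAt g (g' x) x) (hd0 : ∀ s ∈ T, g' s ≠ 0)
    (ha : Int.fract a ∉ T) :
    (⌊g (a + 1)⌋ : ℝ) - ⌊g a⌋ = ∑ s ∈ T, Real.sign (g' s) := by
  set e := toIcoMod (zero_lt_one' ℝ) a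
  have fract_e : ∀ s ∈ T, Int.fract (e s) = s := fun s hs => by
    rw [← toIcoMod_zero_one, toIcoMod_toIcoMod, toIcoMod_eq_self]
    simpa using hT hs
  have g'_e (s : ℝ) : g' (e s) = g' s := hg'.sub_zsmul_eq _
  have hmem : ∀ x ∈ Icc a (a + 1), x ∈ T.image e ↔ Int.fract x ∈ T := by
    intro x hx
    refine ⟨fun h => ?_, fun h => Finset.mem_image.2 ⟨Int.fract x, h, ?_⟩⟩
    · obtain ⟨s, hs, rfl⟩ := Finset.mem_image.1 h
      rwa [fract_e s hs]
    · have hxa : x ≠ a + 1 := by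
        rintro rfl
        exact ha (by rwa [Int.fract_add_one] at h)
      show toIcoMod _ a _ = x
      rw [← toIcoMod_zero_one, toIcoMod_toIcoMod, toIcoMod_eq_self]
      exact ⟨hx.1, lt_of_le_of_ne hx.2 hxa⟩
  have hsub : ↑(T.image e) ⊆ Ioo a (a + 1) := by
    intro x hx
    obtain ⟨s, hs, rfl⟩ := Finset.mem_image.1 hx
    obtain ⟨h₁, h₂⟩ := toIcoMod_mem_Ico (zero_lt_one' ℝ) a s
    refine ⟨lt_of_le_of_ne h₁ fun has => ha ?_, h₂⟩
    rw [has, fract_e s hs]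
    exact hs
  have hinj : Set.InjOn e (T : Set ℝ) := fun s hs t ht hst => by
    rw [← fract_e s hs, ← fract_e t ht, hst]
  rw [floor_sub_floor_eq_sum_sign (by linarith) hg.continuousOn hsub
    (fun x hx => (hint x).trans (hmem x hx).symm)
    (fun x hx => hd x ((hmem x (Ioo_subset_Icc_self (hsub hx))).1 hx))
    (fun x hx => by obtain ⟨s, hs, rfl⟩ := Finset.mem_image.1 hx; rw [g'_e]; exact hd0 s hs),
    Finset.sum_image hinj]
  simp only [g'_e]

theorem intCast_eq_sum_sign_of_add_one {T : Finset ℝ} {N : ℤ} (hg : Continuous g)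
    (hg' : Function.Periodic g' 1) (hT : ↑T ⊆ Ico (0 : ℝ) 1)
    (hint : ∀ x, (∃ n : ℤ, g x = n) ↔ Int.fract x ∈ T)
    (hd : ∀ x, Int.fract x ∈ T → HasDerivAt g (g' x) x) (hd0 : ∀ s ∈ T, g' s ≠ 0)
    (hN : ∀ x, g (x + 1) = g x + N) : (N : ℝ) = ∑ s ∈ T, Real.sign (g' s) := by
  obtain ⟨a, ⟨ha₀, ha₁⟩, haT⟩ := ((Ico_infinite (zero_lt_one' ℝ)).sdiff T.finite_toSet).nonempty
  rw [← floor_add_one_sub_floor_eq_sum_sign hg hg' hT hint hd hd0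
    (by rwa [Int.fract_eq_self.2 ⟨ha₀, ha₁⟩]), hN, Int.floor_add_intCast]
  push_cast
  ring

end FloorCounting

theorem Function.Periodic.map_fract {α : Type*} {f : ℝ → α} (h : Function.Periodic f 1)
    (x : ℝ) : f (Int.fract x) = f x := by
  simpa using h.sub_int_mul_eq (x := x) ⌊x⌋

theorem Function.Periodic.deriv {𝕜 F : Type*} [NontriviallyNormedField 𝕜] [NormedAddCommGroup F]
    [NormedSpace 𝕜 F] {f : 𝕜 → F} {c : 𝕜} (h : Function.Periodic f c) :
    Function.Periodic (deriv f) c := fun x => by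
  rw [← deriv_comp_add_const, h.funext]

theorem exp_mul_I_eq_exp_mul_I_iff {x y : ℝ} :
    exp (x * I) = exp (y * I) ↔ ∃ n : ℤ, x = y + n * (2 * Real.pi) := by
  simpa only [Circle.ext_iff, Circle.coe_exp] using Circle.exp_eq_exp (x := x) (y := y)

theorem exists_int_div_two_pi_eq_iff {φ : ℝ} {v : ℂ} (hv : ‖v‖ = 1) :
    (∃ n : ℤ, (φ - arg v) / (2 * Real.pi) = n) ↔ exp (φ * I) = v := by
  conv_rhs => rw [← (by simpa [hv] using norm_mul_exp_arg_mul_I v : exp (arg v * I) = v)]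
  rw [exp_mul_I_eq_exp_mul_I_iff]
  refine exists_congr fun n => ?_
  rw [div_eq_iff Real.two_pi_pos.ne']
  constructor <;> intro h <;> linarith

theorem exists_pos_eq_add_smul_iff {w p v : ℂ} {φ : ℝ} (hv : ‖v‖ = 1) (hw : w ≠ p)
    (h : w - p = ‖w - p‖ * exp (φ * I)) : (∃ t > (0 : ℝ), w = p + t • v) ↔ exp (φ * I) = v := by
  constructor
  · rintro ⟨t, ht, rfl⟩
    rw [add_sub_cancel_left, real_smul, norm_mul, hv, mul_one, norm_real, Real.norm_of_nonneg ht.le]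
      at h
    exact (mul_left_cancel₀ (ofReal_ne_zero.2 ht.ne') h).symm
  · intro he
    exact ⟨‖w - p‖, norm_pos_iff.2 (sub_ne_zero.2 hw), by rw [real_smul, ← he, ← h]; ring⟩

theorem hasDerivAt_of_eq_norm_mul_exp {f : ℝ → ℂ} {f' : ℂ} {θ : ℝ → ℝ} {s : ℝ}
    (hf : HasDerivAt f f' s) (hfs : f s ≠ 0) (hθ : ContinuousAt θ s)
    (hlift : ∀ t, f t = ‖f t‖ * exp (θ t * I)) : HasDerivAt θ (f' / f s).im s := by
  -- Near `s`, `θ t - θ s` stays in `(-π, π)`, so it is the principal argument of `f t / f s`.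
  have hloc : θ =ᶠ[𝓝 s] fun t => θ s + arg (f t / f s) := by
    filter_upwards [hf.continuousAt.eventually_ne hfs,
      hθ.eventually_mem (Ioo_mem_nhds (sub_lt_self _ Real.pi_pos) (lt_add_of_pos_right _
        Real.pi_pos))] with t hft hθt
    have hquot : f t / f s = ((‖f t‖ / ‖f s‖ : ℝ) : ℂ) *
        (cos (θ t - θ s : ℝ) + sin (θ t - θ s : ℝ) * I) := by
      rw [← exp_mul_I]
      conv_lhs => rw [hlift t, hlift s]
      push_cast
      rw [sub_mul, exp_sub]
      field_simp
    rw [hquot, arg_mul_cos_add_sin_mul_I (div_pos (norm_pos_iff.2 hft) (norm_pos_iff.2 hfs))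
      ⟨by linarith [hθt.1], by linarith [hθt.2]⟩]
    ring
  have hlog := (hf.div_const (f s)).clog_real (by simp [hfs])
  have harg : HasDerivAt (fun t => arg (f t / f s)) (f' / f s).im s := by
    simpa [Function.comp_def, div_self hfs, log_im] using imCLM.hasFDerivAt.comp_hasDerivAt s hlog
  exact (harg.const_add (θ s)).congr_of_eventuallyEq hloc

theorem exists_int_forall_lift_add_sub_eq {f : ℝ → ℂ} {θ : ℝ → ℝ} {c : ℝ}
    (hper : Function.Periodic f c) (hf : ∀ t, f t ≠ 0) (hθ : Continuous θ)
    (hlift : ∀ t, f t = ‖f t‖ * exp (θ t * I)) :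
    ∃ n : ℤ, ∀ t, θ (t + c) - θ t = n * (2 * Real.pi) := by
  have hmem (t : ℝ) : θ (t + c) - θ t ∈ AddSubgroup.zmultiples (2 * Real.pi) := by
    have h := hlift (t + c)
    rw [hper t] at h
    have hexp := mul_left_cancel₀ (by simpa using hf t) (h.symm.trans (hlift t))
    obtain ⟨n, hn⟩ := exp_mul_I_eq_exp_mul_I_iff.1 hexp
    exact AddSubgroup.mem_zmultiples_iff.2 ⟨n, by rw [zsmul_eq_mul]; linarith⟩
  have hconst (t : ℝ) : θ (t + c) - θ t = θ (0 + c) - θ 0 :=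
    isPreconnected_univ.constant_of_mapsTo (isDiscrete_iff_discreteTopology.2
      (inferInstanceAs (DiscreteTopology (AddSubgroup.zmultiples (2 * Real.pi)))))
      (by fun_prop) (fun t _ => hmem t) trivial trivial
  obtain ⟨n, hn⟩ := AddSubgroup.mem_zmultiples_iff.1 (hmem 0)
  exact ⟨n, fun t => by rw [hconst t, ← hn, zsmul_eq_mul]⟩

theorem im_div_real_smul (w v : ℂ) (t : ℝ) :
    (w / (t • v)).im = (v.re * w.im - v.im * w.re) / (t * normSq v) := by
  simp only [div_im, real_smul, mul_re, mul_im, ofReal_re, ofReal_im, normSq_mul, normSq_ofReal]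
  rcases eq_or_ne t 0 with rfl | ht
  · simp
  rcases eq_or_ne (normSq v) 0 with hv | hv
  · simp [hv]
  field_simp
  ring

theorem Real.sign_div_of_pos {a b : ℝ} (hb : 0 < b) : Real.sign (a / b) = Real.sign a := by
  rcases lt_trichotomy a 0 with ha | rfl | ha
  · rw [Real.sign_of_neg ha, Real.sign_of_neg (div_neg_of_neg_of_pos ha hb)]
  · simp
  · rw [Real.sign_of_pos ha, Real.sign_of_pos (div_pos ha hb)]

theorem sign_im_div_eq_sign_det {w z v : ℂ} {t : ℝ} (ht : 0 < t) (hv : v ≠ 0) (hz : z = t • v) :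
    Real.sign (w / z).im = Real.sign (v.re * w.im - v.im * w.re) := by
  rw [hz, im_div_real_smul, Real.sign_div_of_pos (mul_pos ht (normSq_pos.2 hv))]

/-- For a C¹ closed (1-periodic) plane curve `γ`, a point `p` off the curve and a
unit direction `v` such that the ray `{p + t v : t > 0}` meets the curve in finitely
many points, each a transversal crossing, the winding number of `γ` around `p`
(the total argument change divided by `2π`) equals the sum over the crossings of
the crossing signs `sign (det (v, γ'(s)))`. -/
theorem winding_number_eq_sum_of_crossing_signs
    (γ : ℝ → ℂ) (hγ : ContDiff ℝ 1 γ) (hper : Function.Periodic γ 1)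
    (p : ℂ) (hp : p ∉ Set.range γ)
    (v : ℂ) (hv : ‖v‖ = 1)
    (T : Finset ℝ) (hT : ↑T ⊆ Set.Ico (0:ℝ) 1)
    (hray : ∀ s ∈ Set.Ico (0:ℝ) 1, (∃ t > (0:ℝ), γ s = p + t • v) ↔ s ∈ T)
    (htrans : ∀ s ∈ T, v.re * (deriv γ s).im - v.im * (deriv γ s).re ≠ 0)
    (θ : ℝ → ℝ) (hθ : Continuous θ)
    (hlift : ∀ t, γ t - p = (‖γ t - p‖ : ℂ) * Complex.exp (θ t * Complex.I)) :
    θ 1 - θ 0 =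
      2 * Real.pi * ∑ s ∈ T, Real.sign (v.re * (deriv γ s).im - v.im * (deriv γ s).re) := by
  have hγp (t : ℝ) : γ t ≠ p := fun h => hp ⟨t, h⟩
  set g : ℝ → ℝ := fun x => (θ x - arg v) / (2 * Real.pi)
  set g' : ℝ → ℝ := fun x => (deriv γ x / (γ x - p)).im / (2 * Real.pi)
  have hg_deriv (x : ℝ) : HasDerivAt g (g' x) x :=
    ((hasDerivAt_of_eq_norm_mul_exp ((hγ.differentiable one_ne_zero x).hasDerivAt.sub_const p)
      (sub_ne_zero.2 (hγp x)) hθ.continuousAt hlift).sub_const _).div_const _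
  have hcross (x : ℝ) : (∃ n : ℤ, g x = n) ↔ ∃ t > (0 : ℝ), γ x = p + t • v :=
    (exists_int_div_two_pi_eq_iff hv).trans (exists_pos_eq_add_smul_iff hv (hγp x) (hlift x)).symm
  have hsign (x : ℝ) (hx : ∃ t > (0 : ℝ), γ x = p + t • v) :
      Real.sign (g' x) = Real.sign (v.re * (deriv γ x).im - v.im * (deriv γ x).re) := by
    obtain ⟨t, ht, hxt⟩ := hx
    rw [Real.sign_div_of_pos Real.two_pi_pos]
    exact sign_im_div_eq_sign_det ht (norm_ne_zero_iff.1 (hv ▸ one_ne_zero))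
      (by rw [hxt, add_sub_cancel_left])
  have hT_cross (s : ℝ) (hs : s ∈ T) : ∃ t > (0 : ℝ), γ s = p + t • v := (hray s (hT hs)).2 hs
  obtain ⟨N, hN⟩ := exists_int_forall_lift_add_sub_eq (f := fun t => γ t - p) (c := 1)
    (fun t => by simp only [hper t]) (fun t => sub_ne_zero.2 (hγp t)) hθ hlift
  have hcount := intCast_eq_sum_sign_of_add_one (g := g) (g' := g') (N := N)
    (by fun_prop) (fun x => by simp only [g', hper x, hper.deriv x]) hT
    (fun x => by rw [hcross, ← hray _ ⟨Int.fract_nonneg x, Int.fract_lt_one x⟩, hper.map_fract])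
    (fun x _ => hg_deriv x)
    (fun s hs h0 => htrans s hs (by rwa [← Real.sign_eq_zero_iff, ← hsign s (hT_cross s hs),
      Real.sign_eq_zero_iff]))
    (fun x => by simp only [g]; field_simp; linarith [hN x])
  rw [← zero_add 1, hN 0, hcount, Finset.sum_congr rfl fun s hs => hsign s (hT_cross s hs)]
  ring
end

section
/- If a univariate real polynomial is nonnegative on all of ℝ, then it is a sum of squares of two real polynomials. -/
/-!
A nonnegative polynomial of positive degree has a complex root `z`, which yields a divisor
that is a sum of two squares: `(X - z)²` if `z` is real (a real root of a nonnegative polynomial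
is a local minimum, hence a double root), and `(X - Re z)² + (Im z)²` otherwise. The cofactor is
again nonnegative, so induction on the degree and the identity
`(a² + b²)(c² + d²) = (ac - bd)² + (ad + bc)²` finish the proof.
-/

open Polynomial

namespace Polynomial

theorem sq_X_sub_C_dvd_of_isRoot_of_nonneg {p : ℝ[X]} (hp : ∀ t, 0 ≤ p.eval t) {a : ℝ}
    (ha : p.IsRoot a) : (X - C a) ^ 2 ∣ p := by
  rcases eq_or_ne p 0 with rfl | hp0
  · exact dvd_zero _
  have hmin : IsLocalMin (fun t => p.eval t) a :=
    Filter.Eventually.of_forall fun t => by simpa [ha.eq_zero] using hp t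
  have hder : p.derivative.IsRoot a := by
    rw [IsRoot, ← Polynomial.deriv]
    exact hmin.deriv_eq_zero
  rw [← le_rootMultiplicity_iff hp0]
  exact (one_lt_rootMultiplicity_iff_isRoot hp0).mpr ⟨ha, hder⟩

theorem eval_nonneg_of_eval_mul_nonneg {d h : ℝ[X]} (hd0 : d ≠ 0) (hd : ∀ t, 0 ≤ d.eval t)
    (hdh : ∀ t, 0 ≤ (d * h).eval t) (t : ℝ) : 0 ≤ h.eval t := by
  have hdense : Dense {t : ℝ | d.eval t ≠ 0} := by
    simpa [Set.compl_ofPred] using (finite_setOfPred_isRoot hd0).countable.dense_compl ℝ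
  have hsub : {t : ℝ | d.eval t ≠ 0} ⊆ {t | 0 ≤ h.eval t} := fun t ht =>
    nonneg_of_mul_nonneg_right (by simpa using hdh t) ((hd t).lt_of_ne' ht)
  exact (isClosed_le continuous_const h.continuous).closure_subset_iff.mpr hsub (hdense t)

theorem exists_sq_add_sq_dvd_of_nonneg {p : ℝ[X]} (hp : ∀ t, 0 ≤ p.eval t) (hdeg : 0 < p.degree) :
    ∃ q r : ℝ[X], q ^ 2 + r ^ 2 ∣ p ∧ (q ^ 2 + r ^ 2).natDegree = 2 := by
  obtain ⟨z, hz⟩ := IsAlgClosed.exists_aeval_eq_zero ℂ p hdeg.ne'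
  by_cases him : z.im = 0
  · have hroot : p.IsRoot z.re := by
      have hz_re : (z.re : ℂ) = z := Complex.ext rfl (by simp [him])
      rwa [← hz_re, ← Complex.coe_algebraMap, aeval_algebraMap_apply_eq_algebraMap_eval,
        map_eq_zero] at hz
    refine ⟨X - C z.re, 0, ?_, by compute_degree!⟩
    simpa using sq_X_sub_C_dvd_of_isRoot_of_nonneg hp hroot
  · refine ⟨X - C z.re, C z.im, ?_, by compute_degree!⟩
    convert p.quadratic_dvd_of_aeval_eq_zero_im_ne_zero hz him using 1
    rw [Complex.sq_norm, Complex.normSq_apply]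
    simp only [C_add, C_mul, map_ofNat]
    ring

end Polynomial

/-- If a univariate real polynomial is nonnegative on all of `ℝ`, then it is a sum of
squares of two real polynomials. -/
theorem nonneg_poly_eq_sum_two_squares
    (p : Polynomial ℝ) (hp : ∀ t : ℝ, 0 ≤ p.eval t) :
    ∃ q r : Polynomial ℝ, p = q ^ 2 + r ^ 2 := by
  induction hn : p.natDegree using Nat.strong_induction_on generalizing p with
  | _ n ih =>
  rcases Nat.eq_zero_or_pos n with rfl | hpos
  · obtain ⟨c, rfl⟩ := natDegree_eq_zero.mp hn
    have hc : 0 ≤ c := by simpa using hp 0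
    exact ⟨C √c, 0, by rw [← C_pow, Real.sq_sqrt hc, zero_pow two_ne_zero, add_zero]⟩
  obtain ⟨q, r, ⟨h, rfl⟩, hd⟩ :=
    exists_sq_add_sq_dvd_of_nonneg hp (natDegree_pos_iff_degree_pos.mp (hn ▸ hpos))
  have hd0 : q ^ 2 + r ^ 2 ≠ 0 := ne_zero_of_natDegree_gt (n := 0) (by omega)
  have hh0 : h ≠ 0 := by rintro rfl; simp only [mul_zero, natDegree_zero] at hn; omega
  have hh : ∀ t, 0 ≤ h.eval t :=
    eval_nonneg_of_eval_mul_nonneg hd0 (fun t => by simp only [eval_add, eval_pow]; positivity) hp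
  obtain ⟨u, v, rfl⟩ := ih h.natDegree (by rw [← hn, natDegree_mul hd0 hh0]; omega) h hh rfl
  exact sq_add_sq_mul rfl rfl
end
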